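/- Under the MRF-constrained MFM model, the marginal prior on an ordered partition with t clusters of sizes |c_1|,...,|c_t| and edge counts E_c = Σ_{i,i'∈c} g_{ii'} is proportional to V_n(t) · ∏_{c∈𝒞} α_0^{(|c|)} exp(d·E_c), where α_0^{(m)} = Γ(α_0+m)/Γ(α_0) is the rising factorial and V_n(t) = Σ_{K=1}^∞ [K!/(K−t)!] / (Kα_0)^{(n)} · P(K), provided the series V_n(t) converges, which holds whenever Σ_K P(K) = 1 and t ≤ n. -/
import Mathlib


open Finset

/-- The unordered partition of `{1,...,n}` induced by a labeling `z`: the blocks are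
the level sets `{i' : z_{i'} = z_i}`. -/
def partitionOf {n : ℕ} {α : Type*} [DecidableEq α] (z : Fin n → α) :
    Finset (Finset (Fin n)) :=
  Finset.univ.image (fun i => Finset.univ.filter (fun i' => z i' = z i))

/-- The rising factorial `x^{(m)} = x(x+1)···(x+m−1) = Γ(x+m)/Γ(x)`. -/
noncomputable def risingGamma (x : ℝ) (m : ℕ) : ℝ := Real.Gamma (x + m) / Real.Gamma x

lemma risingGamma_eq_prod (x : ℝ) (hx : 0 < x) (m : ℕ) :
    risingGamma x m = ∏ j ∈ range m, (x + j) := by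
  induction m with
  | zero =>
    simp [risingGamma, div_self (Real.Gamma_pos_of_pos hx).ne']
  | succ m ih =>
    rw [prod_range_succ, ← ih, risingGamma, risingGamma]
    push_cast
    rw [show x + ((m : ℝ)+1) = (x + m) + 1 by ring, Real.Gamma_add_one (by positivity)]
    ring

lemma risingGamma_pos (x : ℝ) (hx : 0 < x) (m : ℕ) : 0 < risingGamma x m := by
  rw [risingGamma_eq_prod x hx]
  exact prod_pos fun j _ => by positivity

lemma le_risingGamma (x : ℝ) (hx : 0 < x) (m : ℕ) : x ^ m ≤ risingGamma x m := by
  rw [risingGamma_eq_prod x hx]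
  calc x ^ m = ∏ _j ∈ range m, x := by simp
    _ ≤ _ := prod_le_prod (fun j _ => hx.le)
      (fun j _ => le_add_of_nonneg_right (by positivity))

/-- Under the MRF-constrained MFM model, the marginal prior mass of a partition `𝒞`
with `t` clusters (obtained by marginalizing `q ~ Dir(α_0,...,α_0)`, summing over all
labelings `z` inducing `𝒞`, and mixing over `K` with prior `P`, where `P K` is the
prior probability of `K+1` components) equals
`V_n(t) · ∏_{c∈𝒞} α_0^{(|c|)} exp(d·E_c)` where `α_0^{(m)}` is the rising factorial,
`E_c` is the MRF edge weight within block `c`, and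
`V_n(t) = Σ_K [K!/(K−t)!]/(Kα_0)^{(n)} · P(K)`; moreover the series `V_n(t)`
converges whenever `Σ_K P(K) = 1` and `t ≤ n`. -/
theorem mfm_mrf_partition_prior (n t : ℕ) (hn : 1 ≤ n) (ht : t ≤ n)
    (α0 d : ℝ) (hα0 : 0 < α0) (hd : 0 ≤ d)
    (g : Fin n → Fin n → ℝ) (hg01 : ∀ i i', g i i' = 0 ∨ g i i' = 1)
    (hgsym : ∀ i i', g i i' = g i' i) (hgdiag : ∀ i, g i i = 0)
    (P : ℕ → ℝ) (hP : ∀ K, 0 ≤ P K) (hP1 : ∑' K, P K = 1)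
    (𝒞 : Finset (Finset (Fin n))) (h𝒞card : 𝒞.card = t)
    (h𝒞ne : ∀ c ∈ 𝒞, c.Nonempty)
    (h𝒞disj : ∀ c ∈ 𝒞, ∀ c' ∈ 𝒞, c ≠ c' → Disjoint c c')
    (h𝒞cover : 𝒞.biUnion id = Finset.univ) :
    Summable (fun K : ℕ =>
      ((K + 1).descFactorial t : ℝ) / risingGamma (((K : ℝ) + 1) * α0) n * P K) ∧
    ∑' K : ℕ, P K *
        ∑ z ∈ Finset.univ.filter (fun z : Fin n → Fin (K + 1) => partitionOf z = 𝒞),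
          (Real.Gamma (((K : ℝ) + 1) * α0) / Real.Gamma ((n : ℝ) + ((K : ℝ) + 1) * α0)) *
            (∏ l : Fin (K + 1),
              risingGamma α0 (Finset.univ.filter (fun i => z i = l)).card) *
            Real.exp (d * ∑ i, ∑ i', if i < i' ∧ z i = z i' then g i i' else 0)
      = (∑' K : ℕ,
            ((K + 1).descFactorial t : ℝ) / risingGamma (((K : ℝ) + 1) * α0) n * P K) *
          ∏ c ∈ 𝒞, risingGamma α0 c.card *
            Real.exp (d * ∑ i ∈ c, ∑ i' ∈ c, if i < i' then g i i' else 0) := by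
  -- block structure
  have hBex : ∀ i : Fin n, ∃ c, c ∈ 𝒞 ∧ i ∈ c := by
    intro i
    have h : i ∈ 𝒞.biUnion id := h𝒞cover ▸ mem_univ i
    simpa using mem_biUnion.mp h
  choose B hB hiB using hBex
  have hBuniq : ∀ (i : Fin n) (c : Finset (Fin n)), c ∈ 𝒞 → i ∈ c → c = B i := by
    intro i c hc hic
    by_contra hne
    exact (Finset.disjoint_left.mp (h𝒞disj c hc (B i) (hB i) hne)) hic (hiB i)
  choose rep hrep using h𝒞ne
  -- characterization of labelings inducing 𝒞
  have hfib : ∀ {K : ℕ} (z : Fin n → Fin (K+1)),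
      (∀ i i', z i = z i' ↔ B i = B i') →
      ∀ j, Finset.univ.filter (fun i'' => z i'' = z j) = B j := by
    intro K z hz j
    ext i''
    simp only [mem_filter, mem_univ, true_and]
    rw [hz i'' j]
    constructor
    · intro h; exact h ▸ hiB i''
    · intro h; exact (hBuniq i'' (B j) (hB j) h).symm
  have hchar : ∀ {K : ℕ} (z : Fin n → Fin (K+1)),
      partitionOf z = 𝒞 ↔ ∀ i i', z i = z i' ↔ B i = B i' := by
    intro K z
    constructor
    · intro h i i'
      have hL : ∀ j : Fin n, Finset.univ.filter (fun i'' => z i'' = z j) = B j := by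
        intro j
        refine hBuniq j _ ?_ (by simp)
        rw [← h, partitionOf]
        exact mem_image_of_mem _ (mem_univ j)
      constructor
      · intro hzz
        have h1 : i' ∈ B i := by
          rw [← hL i]; simp [hzz.symm]
        exact hBuniq i' (B i) (hB i) h1
      · intro hBB
        have h1 : i' ∈ B i := hBB ▸ hiB i'
        rw [← hL i] at h1
        have := (mem_filter.mp h1).2
        exact this.symm
    · intro hz
      unfold partitionOf
      ext c
      simp only [mem_image, mem_univ, true_and]
      constructor
      · rintro ⟨i, rfl⟩; rw [hfib z hz i]; exact hB i
      · intro hc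
        exact ⟨rep c hc, by
          rw [hfib z hz (rep c hc)]
          exact (hBuniq _ c hc (hrep c hc)).symm⟩
  -- the per-K identity
  have key : ∀ K : ℕ,
      ∑ z ∈ Finset.univ.filter (fun z : Fin n → Fin (K + 1) => partitionOf z = 𝒞),
          (Real.Gamma (((K : ℝ) + 1) * α0) / Real.Gamma ((n : ℝ) + ((K : ℝ) + 1) * α0)) *
            (∏ l : Fin (K + 1),
              risingGamma α0 (Finset.univ.filter (fun i => z i = l)).card) *
            Real.exp (d * ∑ i, ∑ i', if i < i' ∧ z i = z i' then g i i' else 0)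
        = ((K + 1).descFactorial t : ℝ) / risingGamma (((K : ℝ) + 1) * α0) n *
          ∏ c ∈ 𝒞, risingGamma α0 c.card *
            Real.exp (d * ∑ i ∈ c, ∑ i' ∈ c, if i < i' then g i i' else 0) := by
    intro K
    set x : ℝ := ((K : ℝ) + 1) * α0 with hxdef
    have hx : (0:ℝ) < x := by positivity
    -- each summand is the same constant
    have hconst : ∀ z ∈ Finset.univ.filter
        (fun z : Fin n → Fin (K + 1) => partitionOf z = 𝒞),
        (Real.Gamma x / Real.Gamma ((n : ℝ) + x)) *
            (∏ l : Fin (K + 1),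
              risingGamma α0 (Finset.univ.filter (fun i => z i = l)).card) *
            Real.exp (d * ∑ i, ∑ i', if i < i' ∧ z i = z i' then g i i' else 0)
        = (risingGamma x n)⁻¹ *
          ∏ c ∈ 𝒞, risingGamma α0 c.card *
            Real.exp (d * ∑ i ∈ c, ∑ i' ∈ c, if i < i' then g i i' else 0) := by
      intro z hzmem
      have hz : ∀ i i', z i = z i' ↔ B i = B i' :=
        (hchar z).mp (mem_filter.mp hzmem).2
      -- (1) Gamma ratio
      have hratio : Real.Gamma x / Real.Gamma ((n : ℝ) + x) = (risingGamma x n)⁻¹ := by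
        rw [risingGamma, inv_div, add_comm (n:ℝ) x]
      -- (2) product over labels
      have hprod : (∏ l : Fin (K + 1),
            risingGamma α0 (Finset.univ.filter (fun i => z i = l)).card)
          = ∏ c ∈ 𝒞, risingGamma α0 c.card := by
        have h1 : ∏ l ∈ Finset.univ.image z,
              risingGamma α0 (Finset.univ.filter (fun i => z i = l)).card
            = ∏ l : Fin (K + 1),
              risingGamma α0 (Finset.univ.filter (fun i => z i = l)).card := by
          refine Finset.prod_subset (subset_univ _) ?_
          intro l _ hl
          have hempty : Finset.univ.filter (fun i => z i = l) = ∅ := by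
            ext i
            simp only [mem_filter, mem_univ, true_and, notMem_empty, iff_false]
            intro h
            exact hl (mem_image.mpr ⟨i, mem_univ i, h⟩)
          rw [hempty]
          simp [risingGamma_eq_prod α0 hα0]
        rw [← h1]
        refine (Finset.prod_bij (fun c hc => z (rep c hc)) ?_ ?_ ?_ ?_).symm
        · intro c hc
          exact mem_image_of_mem z (mem_univ _)
        · intro c hc c' hc' h
          have hBB := (hz _ _).mp h
          rw [hBuniq (rep c hc) c hc (hrep c hc),
            hBuniq (rep c' hc') c' hc' (hrep c' hc')]
          exact hBB
        · intro l hl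
          obtain ⟨i, _, rfl⟩ := mem_image.mp hl
          refine ⟨B i, hB i, ?_⟩
          exact (hz _ _).mpr (hBuniq (rep (B i) (hB i)) (B i) (hB i)
            (hrep (B i) (hB i))).symm
        · intro c hc
          rw [hfib z hz (rep c hc)]
          exact congrArg _ (congrArg _ (hBuniq (rep c hc) c hc (hrep c hc)))
      -- (3) edge sum
      have hinner : ∀ i : Fin n,
          (∑ i', if i < i' ∧ z i = z i' then g i i' else 0)
          = ∑ i' ∈ B i, (if i < i' then g i i' else 0) := by
        intro i
        rw [← Finset.sum_subset (subset_univ (B i)) (f := fun i' =>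
            if i < i' ∧ z i = z i' then g i i' else 0) ?_]
        · refine Finset.sum_congr rfl fun i' hi' => ?_
          have : z i = z i' := (hz i i').mpr (hBuniq i' (B i) (hB i) hi')
          simp [this]
        · intro i' _ hi'
          have : ¬ z i = z i' := fun h => hi' ((hz i i').mp h ▸ hiB i')
          simp [this]
      have hedge : (∑ i, ∑ i', if i < i' ∧ z i = z i' then g i i' else 0)
          = ∑ c ∈ 𝒞, ∑ i ∈ c, ∑ i' ∈ c, (if i < i' then g i i' else 0) := by
        have hPD : Set.PairwiseDisjoint (↑𝒞 : Set (Finset (Fin n))) id := by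
          intro c hc c' hc' hne
          exact h𝒞disj c (mem_coe.mp hc) c' (mem_coe.mp hc') hne
        calc (∑ i, ∑ i', if i < i' ∧ z i = z i' then g i i' else 0)
            = ∑ i, ∑ i' ∈ B i, (if i < i' then g i i' else 0) :=
              Finset.sum_congr rfl fun i _ => hinner i
          _ = ∑ c ∈ 𝒞, ∑ i ∈ c, ∑ i' ∈ B i, (if i < i' then g i i' else 0) := by
              rw [show (Finset.univ : Finset (Fin n)) = 𝒞.biUnion id from h𝒞cover.symm,
                Finset.sum_biUnion hPD]
              simp only [id_eq]
          _ = ∑ c ∈ 𝒞, ∑ i ∈ c, ∑ i' ∈ c, (if i < i' then g i i' else 0) := by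
              refine Finset.sum_congr rfl fun c hc => Finset.sum_congr rfl fun i hi => ?_
              rw [← hBuniq i c hc hi]
      rw [hratio, hprod, hedge, mul_sum, Real.exp_sum, mul_assoc,
        ← Finset.prod_mul_distrib]
    -- cardinality of the set of labelings
    have hcard : (Finset.univ.filter
        (fun z : Fin n → Fin (K + 1) => partitionOf z = 𝒞)).card
        = (K + 1).descFactorial t := by
      have hcb : (Finset.univ.filter
          (fun z : Fin n → Fin (K + 1) => partitionOf z = 𝒞)).card
          = (Finset.univ : Finset ({c // c ∈ 𝒞} ↪ Fin (K + 1))).card := by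
        refine Finset.card_bij'
          (fun z hzmem => ⟨fun c => z (rep c.1 c.2), ?_⟩)
          (fun e _ => fun i => e ⟨B i, hB i⟩) ?_ ?_ ?_ ?_
        · -- injectivity of forward map
          intro c c' h
          have hz : ∀ i i', z i = z i' ↔ B i = B i' :=
            (hchar z).mp (mem_filter.mp hzmem).2
          have hBB := (hz _ _).mp h
          apply Subtype.ext
          rw [hBuniq (rep c.1 c.2) c.1 c.2 (hrep c.1 c.2),
            hBuniq (rep c'.1 c'.2) c'.1 c'.2 (hrep c'.1 c'.2)]
          exact hBB
        · intro z hzmem; exact mem_univ _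
        · -- backward map lands in the filter
          intro e _
          refine mem_filter.mpr ⟨mem_univ _, ?_⟩
          refine (hchar _).mpr fun i i' => ?_
          constructor
          · intro h
            have := e.injective h
            exact congrArg Subtype.val this
          · intro h
            exact congrArg e (Subtype.ext h)
        · -- left inverse
          intro z hzmem
          have hz : ∀ i i', z i = z i' ↔ B i = B i' :=
            (hchar z).mp (mem_filter.mp hzmem).2
          funext i
          exact (hz _ _).mpr (hBuniq (rep (B i) (hB i)) (B i) (hB i)
            (hrep (B i) (hB i))).symm
        · -- right inverse
          intro e _
          apply DFunLike.ext
          intro c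
          exact congrArg e (Subtype.ext (hBuniq (rep c.1 c.2) c.1 c.2
            (hrep c.1 c.2)).symm)
      rw [hcb, card_univ, Fintype.card_embedding_eq, Fintype.card_fin,
        Fintype.card_coe, h𝒞card]
    rw [Finset.sum_congr rfl hconst, Finset.sum_const, hcard, nsmul_eq_mul,
      div_eq_mul_inv, mul_assoc]
  -- summability
  have hPsum : Summable P := by
    by_contra h
    rw [tsum_eq_zero_of_not_summable h] at hP1
    norm_num at hP1
  have hbound : ∀ K : ℕ,
      ((K + 1).descFactorial t : ℝ) / risingGamma (((K : ℝ) + 1) * α0) n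
      ≤ (α0⁻¹) ^ n := by
    intro K
    have hx : (0:ℝ) < ((K : ℝ) + 1) * α0 := by positivity
    have hrpos := risingGamma_pos _ hx n
    rw [div_le_iff₀ hrpos]
    calc ((K + 1).descFactorial t : ℝ) ≤ ((K : ℝ) + 1) ^ t := by
          have := Nat.descFactorial_le_pow (K + 1) t
          calc ((K + 1).descFactorial t : ℝ) ≤ ((K + 1) ^ t : ℕ) := by exact_mod_cast this
            _ = ((K : ℝ) + 1) ^ t := by push_cast; ring
      _ ≤ ((K : ℝ) + 1) ^ n := by
          apply pow_le_pow_right₀ (by linarith [Nat.cast_nonneg (α := ℝ) K]) ht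
      _ = (α0⁻¹) ^ n * (((K : ℝ) + 1) * α0) ^ n := by
          rw [← mul_pow, show α0⁻¹ * (((K : ℝ) + 1) * α0) = (K : ℝ) + 1 by
            field_simp]
      _ ≤ (α0⁻¹) ^ n * risingGamma (((K : ℝ) + 1) * α0) n := by
          apply mul_le_mul_of_nonneg_left (le_risingGamma _ hx n) (by positivity)
  have hsummable : Summable (fun K : ℕ =>
      ((K + 1).descFactorial t : ℝ) / risingGamma (((K : ℝ) + 1) * α0) n * P K) := by
    refine Summable.of_nonneg_of_le (fun K => ?_) (fun K => ?_)
      (hPsum.mul_left ((α0⁻¹) ^ n))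
    · have hx : (0:ℝ) < ((K : ℝ) + 1) * α0 := by positivity
      exact mul_nonneg (div_nonneg (Nat.cast_nonneg _)
        (risingGamma_pos _ hx n).le) (hP K)
    · exact mul_le_mul_of_nonneg_right (hbound K) (hP K)
  refine ⟨hsummable, ?_⟩
  calc ∑' K : ℕ, P K *
        ∑ z ∈ Finset.univ.filter (fun z : Fin n → Fin (K + 1) => partitionOf z = 𝒞),
          (Real.Gamma (((K : ℝ) + 1) * α0) / Real.Gamma ((n : ℝ) + ((K : ℝ) + 1) * α0)) *
            (∏ l : Fin (K + 1),
              risingGamma α0 (Finset.univ.filter (fun i => z i = l)).card) *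
            Real.exp (d * ∑ i, ∑ i', if i < i' ∧ z i = z i' then g i i' else 0)
      = ∑' K : ℕ,
          (((K + 1).descFactorial t : ℝ) / risingGamma (((K : ℝ) + 1) * α0) n * P K) *
          ∏ c ∈ 𝒞, risingGamma α0 c.card *
            Real.exp (d * ∑ i ∈ c, ∑ i' ∈ c, if i < i' then g i i' else 0) := by
        refine tsum_congr fun K => ?_
        rw [key K]; ring
    _ = _ := tsum_mul_right
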